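/- Let Q be a finite acyclic quiver with vertex set V and let K be the full subquiver of Q on a subset W ⊆ V (i.e. K has vertex set W and arrow relation arr restricted to W). Then the monoid homomorphism HK(K) → HK(Q) sending the generator x_t of HK(K) to the generator x_t of HK(Q) for each t ∈ W is injective; consequently, for any field k, the induced map of monoid algebras realizes MonoidAlgebra k HK(K) as a subalgebra of MonoidAlgebra k HK(Q). -/

import Mathlib

/-- The defining relations of the Hecke–Kiselman monoid of a quiver with
vertex type `V` and arrow relation `arr`. -/
inductive HKRel {V : Type} (arr : V → V → Prop) : FreeMonoid V → FreeMonoid V → Prop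
  | idem (t : V) :
      HKRel arr (FreeMonoid.of t * FreeMonoid.of t) (FreeMonoid.of t)
  | braid (s t : V) :
      HKRel arr (FreeMonoid.of s * FreeMonoid.of t * FreeMonoid.of s)
        (FreeMonoid.of t * FreeMonoid.of s * FreeMonoid.of t)
  | absorb (s t : V) : ¬ arr t s →
      HKRel arr (FreeMonoid.of t * FreeMonoid.of s * FreeMonoid.of t)
        (FreeMonoid.of s * FreeMonoid.of t)

/-- The congruence on the free monoid generated by the Hecke–Kiselman relations. -/
def HKCon {V : Type} (arr : V → V → Prop) : Con (FreeMonoid V) := conGen (HKRel arr)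

/-- The Hecke–Kiselman monoid of the quiver `(V, arr)`. -/
abbrev HK {V : Type} (arr : V → V → Prop) : Type := (HKCon arr).Quotient

/-- The generator of the Hecke–Kiselman monoid attached to the vertex `t`. -/
def HK.x {V : Type} (arr : V → V → Prop) (t : V) : HK arr :=
  (HKCon arr).mk' (FreeMonoid.of t)

/-- The quiver `(V, arr)` is acyclic: the transitive closure of `arr` is irreflexive. -/
def IsAcyclicQuiver {V : Type} (arr : V → V → Prop) : Prop :=
  ∀ v : V, ¬ Relation.TransGen arr v v


/-!
Deleting the vertices outside `W` gives a retraction `HK(Q) →* HK(K)`: send `x_t` to `x_t` for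
`t ∈ W` and to `1` otherwise. Each defining relation of `HK(Q)` maps either to the same relation
of `HK(K)` or, once a generator becomes `1`, to an idempotency relation. This retraction is a left
inverse of `φ`.
-/

namespace HK

variable {V : Type} {arr : V → V → Prop}

lemma mk'_eq_of_rel {a b : FreeMonoid V} (h : HKRel arr a b) :
    (HKCon arr).mk' a = (HKCon arr).mk' b :=
  (HKCon arr).eq.2 (ConGen.Rel.of _ _ h)

lemma x_mul_self (t : V) : x arr t * x arr t = x arr t := by
  simpa [x, ← map_mul] using mk'_eq_of_rel (HKRel.idem (arr := arr) t)

lemma x_braid (s t : V) : x arr s * x arr t * x arr s = x arr t * x arr s * x arr t := by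
  simpa [x, ← map_mul] using mk'_eq_of_rel (HKRel.braid (arr := arr) s t)

lemma x_absorb {s t : V} (h : ¬ arr t s) : x arr t * x arr s * x arr t = x arr s * x arr t := by
  simpa [x, ← map_mul] using mk'_eq_of_rel (HKRel.absorb s t h)

structure SatisfiesRelations (arr : V → V → Prop) {M : Type*} [Monoid M] (g : V → M) : Prop where
  idem : ∀ t, g t * g t = g t
  braid : ∀ s t, g s * g t * g s = g t * g s * g t
  absorb : ∀ s t, ¬ arr t s → g t * g s * g t = g s * g t

section lift

variable {M : Type*} [Monoid M] {g : V → M}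

lemma SatisfiesRelations.hkCon_le_ker (hg : SatisfiesRelations arr g) :
    HKCon arr ≤ Con.ker (FreeMonoid.lift g) :=
  Con.conGen_le.2 fun a b h => by
    cases h with
    | idem t => simpa [FreeMonoid.lift_eval_of] using hg.idem t
    | braid s t => simpa [FreeMonoid.lift_eval_of] using hg.braid s t
    | absorb s t hts => simpa [FreeMonoid.lift_eval_of] using hg.absorb s t hts

def lift (hg : SatisfiesRelations arr g) : HK arr →* M :=
  (HKCon arr).lift (FreeMonoid.lift g) hg.hkCon_le_ker

@[simp]
lemma lift_x (hg : SatisfiesRelations arr g) (t : V) : lift hg (x arr t) = g t := rfl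

end lift

lemma hom_ext {M : Type*} [Monoid M] {f g : HK arr →* M} (h : ∀ t, f (x arr t) = g (x arr t)) :
    f = g :=
  Con.hom_ext <| FreeMonoid.hom_eq h

open Classical in
noncomputable def restrict (W : Set V) : HK arr →* HK (fun a b : W => arr a b) :=
  lift (g := fun t => if h : t ∈ W then x _ ⟨t, h⟩ else 1)
    { idem := fun t => by split_ifs <;> simp [x_mul_self]
      braid := fun s t => by split_ifs <;> simp [x_braid, x_mul_self]
      absorb := fun s t hts => by
        split_ifs with ht hs hs
        · exact x_absorb (arr := fun a b : W => arr a b) (s := ⟨s, hs⟩) (t := ⟨t, ht⟩) hts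
        all_goals simp [x_mul_self] }

lemma restrict_x_of_mem (W : Set V) (t : W) : restrict (arr := arr) W (x arr t) = x _ t := by
  simp [restrict]

lemma restrict_leftInverse (W : Set V) (φ : HK (fun a b : W => arr a b) →* HK arr)
    (hφ : ∀ t : W, φ (x _ t) = x arr t) : Function.LeftInverse (restrict W) φ :=
  DFunLike.congr_fun (f := (restrict W).comp φ) (g := MonoidHom.id _) <|
    hom_ext fun t => by simp [hφ, restrict_x_of_mem]

end HK

theorem hk_full_subquiver_injective_general (V : Type) (arr : V → V → Prop)
    (W : Set V)
    (φ : HK (fun a b : W => arr a b) →* HK arr)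
    (hφ : ∀ t : W, φ (HK.x (fun a b : W => arr a b) t) = HK.x arr (t : V)) :
    Function.Injective φ ∧
    ∀ (k : Type) [Field k],
      Function.Injective (MonoidAlgebra.mapDomainAlgHom k k φ) := by
  have hφ_inj := (HK.restrict_leftInverse W φ hφ).injective
  exact ⟨hφ_inj, fun k _ => MonoidAlgebra.mapDomain_injective hφ_inj⟩

/-- If `K` is the full subquiver of a finite acyclic quiver `Q` on a
subset `W` of the vertices, then the monoid homomorphism `HK(K) →* HK(Q)` sending
generators to generators is injective; consequently, for any field `k`, the induced
algebra homomorphism of monoid algebras is injective, realizing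
`MonoidAlgebra k (HK K)` as a subalgebra of `MonoidAlgebra k (HK Q)`. -/
theorem hk_full_subquiver_injective (V : Type) [Fintype V] (arr : V → V → Prop)
    (hQ : IsAcyclicQuiver arr) (W : Set V)
    (φ : HK (fun a b : W => arr a b) →* HK arr)
    (hφ : ∀ t : W, φ (HK.x (fun a b : W => arr a b) t) = HK.x arr (t : V)) :
    Function.Injective φ ∧
    ∀ (k : Type) [Field k],
      Function.Injective (MonoidAlgebra.mapDomainAlgHom k k φ) :=
  hk_full_subquiver_injective_general V arr W φ hφ
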